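/- Fix β > 0, let T ∈ ℝ, and let I₁, I₂, θ : [T,∞) → ℝ be continuously differentiable functions with I₂(t) > 0 and θ(t) ∈ (0,2π) for all t ≥ T, satisfying for all t ≥ T: I₁' = 2K'(0)I₁² + 2K'(θ)I₁I₂, I₂' = 2K'(0)I₂² + 2K'(2π−θ)I₁I₂, and θ' = 2(K(0)−K(2π−θ))I₁ + 2(K(θ)−K(0))I₂. Suppose moreover that I₁(t)/I₂(t) → 1 and θ(t) → π as t → ∞. Then K'(0) + K'(π) < 0 and lim_{t→∞} t·I₂(t) = lim_{t→∞} t·I₁(t) = 1/(−2(K'(0)+K'(π))); i.e. both I₁ and I₂ decay to 0 at rate asymptotic to 1/(−2(K'(0)+K'(π))·t). -/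

import Mathlib

open Real

/-- The kernel `K` of the logarithmic-spiral vortex-sheet system. -/
noncomputable def Kker (β θ : ℝ) : ℝ :=
  (1/4) * (Complex.exp ((2*((β:ℂ) - Complex.I)/(1+(β:ℂ)^2)) * ((θ:ℂ) - (Real.pi:ℂ))) /
    Complex.sin (2*(Real.pi:ℂ)*(1+Complex.I*(β:ℂ))/(1+(β:ℂ)^2))).re

/-- The derivative `K'` of the kernel on `(0, 2π)`, given by the explicit formula;
`Kd β 0` is `K'(+0)` and `Kd β (2π)` is `K'(−0)` (the formula is continuous). -/
noncomputable def Kd (β θ : ℝ) : ℝ :=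
  (2*β/(1+β^2)) * Kker β θ +
  (1/(2*(1+β^2))) * (Complex.exp ((2*((β:ℂ) - Complex.I)/(1+(β:ℂ)^2)) * ((θ:ℂ) - (Real.pi:ℂ))) /
    Complex.sin (2*(Real.pi:ℂ)*(1+Complex.I*(β:ℂ))/(1+(β:ℂ)^2))).im

/-- `K'(0) = (K'(+0) + K'(−0))/2`. -/
noncomputable def Kd0 (β : ℝ) : ℝ := (Kd β 0 + Kd β (2*Real.pi))/2

/-- The second derivative `K''` of the kernel on `(0, 2π)`. -/
noncomputable def Kdd (β θ : ℝ) : ℝ := deriv (Kd β) θ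

/-!
With `w = 2(β - i)/(1 + β²)`, the formula defining `K'` reads `K' = (1/4) Re (w e^{w(θ-π)} / S)`, and
`S = i sinh z` for `z = wπ = p + iq`, `p > 0 > q`. Hence
`K'(0) + K'(π) = Im (z (cosh z + 1) / sinh z) / (4π) = (q sinh p - p sin q) / (4π (cosh p - cos q))`,
which is negative since `sin |q| ≤ |q|` and `p < sinh p`.

Along the solution `(1/I₂)' = -2K'(0) - 2K'(2π - θ) I₁/I₂ → -2(K'(0) + K'(π)) > 0`, so by the mean
value theorem `1/(t I₂) → -2(K'(0) + K'(π))`, and `t I₁ = (I₁/I₂) (t I₂)` has the same limit.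
-/

open Filter Topology

-- `(cosh z + 1) / sinh z = coth (z / 2)` for `z = p + qi`, in real coordinates and without division.
open Complex in
theorem Complex.cosh_add_one_mul (p q : ℝ) :
    (cosh (p + q * I) + 1) * (Real.cosh p - Real.cos q) =
      sinh (p + q * I) * (Real.sinh p - Real.sin q * I) := by
  rw [cosh_add, sinh_add, cosh_mul_I, sinh_mul_I]
  push_cast
  linear_combination (cosh (p:ℂ) * sin (q:ℂ) ^ 2) * I_sq + cos (q:ℂ) * cosh_sq (p:ℂ)
    - cosh (p:ℂ) * sin_sq_add_cos_sq (q:ℂ)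

open Complex in
theorem Complex.sinh_ne_zero_of_re_ne_zero {z : ℂ} (hz : z.re ≠ 0) : sinh z ≠ 0 := by
  intro h
  obtain ⟨k, hk⟩ := sin_eq_zero_iff.mp (by rw [sin_mul_I, h, zero_mul] : sin (z * I) = 0)
  apply hz
  simpa using congrArg im hk

open Complex in
theorem Complex.im_mul_cosh_add_one_div_sinh {p : ℝ} (hp : p ≠ 0) (q : ℝ) :
    ((p + q * I) * (cosh (p + q * I) + 1) / sinh (p + q * I)).im =
      (q * Real.sinh p - p * Real.sin q) / (Real.cosh p - Real.cos q) := by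
  have hD : Real.cosh p - Real.cos q ≠ 0 := by
    linarith [Real.one_lt_cosh.mpr hp, Real.cos_le_one q]
  have hS : sinh (p + q * I) ≠ 0 := sinh_ne_zero_of_re_ne_zero (by simpa using hp)
  have : (p + q * I) * (cosh (p + q * I) + 1) / sinh (p + q * I) =
      (p + q * I) * (Real.sinh p - Real.sin q * I) / (Real.cosh p - Real.cos q : ℝ) := by
    rw [div_eq_div_iff hS (ofReal_ne_zero.mpr hD), ofReal_sub]
    linear_combination (p + q * I) * cosh_add_one_mul p q
  rw [this, div_ofReal_im]
  simp only [mul_im, mul_re, add_re, add_im, sub_re, sub_im, ofReal_re, ofReal_im, I_re, I_im]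
  ring

theorem Complex.im_mul_cosh_add_one_div_sinh_neg {p q : ℝ} (hp : 0 < p) (hq : q < 0) :
    ((p + q * I) * (Complex.cosh (p + q * I) + 1) / Complex.sinh (p + q * I)).im < 0 := by
  rw [im_mul_cosh_add_one_div_sinh hp.ne']
  apply div_neg_of_neg_of_pos
  · have h₁ : Real.sin (-q) ≤ -q := Real.sin_le (by linarith)
    have h₂ : p < Real.sinh p := Real.self_lt_sinh_iff.mpr hp
    rw [Real.sin_neg] at h₁
    nlinarith
  · linarith [Real.one_lt_cosh.mpr hp.ne', Real.cos_le_one q]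

theorem tendsto_div_of_hasDerivAt_tendsto {g g' : ℝ → ℝ} {T L : ℝ}
    (hg : ∀ t, T ≤ t → HasDerivAt g (g' t) t) (hg' : Tendsto g' atTop (𝓝 L)) :
    Tendsto (fun t => g t / t) atTop (𝓝 L) := by
  set h : ℝ → ℝ := fun t => g t - L * t
  have hh : h =o[atTop] id := by
    refine Asymptotics.isLittleO_iff.mpr fun ε hε => ?_
    obtain ⟨T₁, hT₁⟩ := eventually_atTop.mp <| (eventually_ge_atTop (max T 0)).and <|
      (tendsto_iff_norm_sub_tendsto_zero.mp hg').eventually (ge_mem_nhds (half_pos hε))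
    have hmvt : ∀ t, T₁ ≤ t → ‖h t - h T₁‖ ≤ ε / 2 * (t - T₁) := fun t ht =>
      norm_image_sub_le_of_norm_deriv_le_segment'
        (fun x hx => (((hg x (le_of_max_le_left ((hT₁ T₁ le_rfl).1.trans hx.1))).sub
          ((hasDerivAt_id x).const_mul L)).hasDerivWithinAt.congr_deriv (by simp)))
        (fun x hx => (hT₁ x hx.1).2) t ⟨ht, le_rfl⟩
    filter_upwards [eventually_ge_atTop (max T₁ (2 * ‖h T₁‖ / ε))] with t ht
    have hT₁0 : 0 ≤ T₁ := le_of_max_le_right (hT₁ T₁ le_rfl).1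
    have ht₁ : T₁ ≤ t := le_of_max_le_left ht
    have ht₂ : 2 * ‖h T₁‖ / ε ≤ t := le_of_max_le_right ht
    rw [div_le_iff₀ hε] at ht₂
    calc ‖h t‖ ≤ ‖h T₁‖ + ‖h t - h T₁‖ := norm_le_norm_add_norm_sub' _ _
      _ ≤ ε / 2 * t + ε / 2 * (t - T₁) := by linarith [hmvt t ht₁]
      _ ≤ ε * ‖id t‖ := by
        rw [id, Real.norm_of_nonneg (hT₁0.trans ht₁)]; nlinarith
  have := hh.tendsto_div_nhds_zero.add_const L
  rw [zero_add] at this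
  refine this.congr' ?_
  filter_upwards [eventually_gt_atTop 0] with t ht
  simp only [h, id]
  field_simp
  ring

theorem tendsto_mul_of_hasDerivAt_inv_tendsto {f φ : ℝ → ℝ} {T L : ℝ}
    (hf : ∀ t, T ≤ t → HasDerivAt (fun u => (f u)⁻¹) (φ t) t) (hφ : Tendsto φ atTop (𝓝 L))
    (hL : L ≠ 0) : Tendsto (fun t => t * f t) atTop (𝓝 L⁻¹) :=
  ((tendsto_div_of_hasDerivAt_tendsto hf hφ).inv₀ hL).congr fun t => by simp [inv_div]

noncomputable def kernelRate (β : ℝ) : ℂ := 2*((β:ℂ) - Complex.I)/(1+(β:ℂ)^2)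

noncomputable def kernelDenom (β : ℝ) : ℂ :=
  Complex.sin (2*(Real.pi:ℂ)*(1+Complex.I*(β:ℂ))/(1+(β:ℂ)^2))

theorem one_add_ofReal_sq_ne_zero (β : ℝ) : (1 + (β:ℂ)^2) ≠ 0 := by
  exact_mod_cast (by positivity : (1 + β^2 : ℝ) ≠ 0)

theorem kernelRate_eq (β : ℝ) :
    kernelRate β = ((2*β/(1+β^2) : ℝ) : ℂ) + ((-2/(1+β^2) : ℝ) : ℂ) * Complex.I := by
  have := one_add_ofReal_sq_ne_zero β
  rw [kernelRate]; push_cast; field_simp; ring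

theorem kernelDenom_eq (β : ℝ) :
    kernelDenom β = Complex.sinh (kernelRate β * π) * Complex.I := by
  have := one_add_ofReal_sq_ne_zero β
  rw [kernelDenom, kernelRate, ← Complex.sin_mul_I]
  congr 1
  field_simp
  ring_nf
  rw [Complex.I_sq]
  ring

theorem Kd_eq (β θ : ℝ) :
    Kd β θ = (kernelRate β * Complex.exp (kernelRate β * (θ - π)) / kernelDenom β).re / 4 := by
  rw [mul_div_assoc]
  generalize hE : Complex.exp (kernelRate β * (θ - π)) / kernelDenom β = E
  have hKd : Kd β θ = 2*β/(1+β^2) * (1/4 * E.re) + 1/(2*(1+β^2)) * E.im := by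
    rw [← hE]; rfl
  rw [hKd, Complex.mul_re, kernelRate_eq]
  simp only [Complex.add_re, Complex.add_im, Complex.ofReal_re, Complex.ofReal_im,
    Complex.mul_re, Complex.mul_im, Complex.I_re, Complex.I_im]
  field_simp
  ring

theorem continuous_Kd (β : ℝ) : Continuous (Kd β) := by
  simp only [funext (Kd_eq β)]
  fun_prop

theorem Kd0_add_Kd_pi (β : ℝ) :
    Kd0 β + Kd β π = ((kernelRate β * π) * (Complex.cosh (kernelRate β * π) + 1) /
      Complex.sinh (kernelRate β * π)).im / (4 * π) := by
  rw [Kd0, Kd_eq, Kd_eq, Kd_eq, kernelDenom_eq]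
  set w := kernelRate β
  set z := w * π
  have hsum : (w * Complex.exp (w * ((0:ℝ) - π)) / (Complex.sinh z * Complex.I) +
      w * Complex.exp (w * ((2*π:ℝ) - π)) / (Complex.sinh z * Complex.I)) / 2 +
      w * Complex.exp (w * ((π:ℝ) - π)) / (Complex.sinh z * Complex.I) =
      z * (Complex.cosh z + 1) / Complex.sinh z / π * (-Complex.I) := by
    rw [Complex.cosh]
    push_cast
    rw [show w * (0 - π) = -z by ring, show w * (2 * π - π) = z by ring, sub_self, mul_zero,
      Complex.exp_zero]
    have : (π : ℂ) ≠ 0 := by exact_mod_cast Real.pi_ne_zero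
    field_simp
    simp only [z]
    ring_nf
    rw [Complex.I_sq]
    ring
  have hre := congrArg Complex.re hsum
  simp only [Complex.add_re, Complex.div_ofNat_re, mul_neg, Complex.neg_re,
    Complex.mul_I_re, Complex.div_ofReal_im, neg_neg] at hre
  linear_combination hre / 4

theorem Kd0_add_Kd_pi_neg {β : ℝ} (hβ : 0 < β) : Kd0 β + Kd β π < 0 := by
  have hz : kernelRate β * π =
      ((2*β/(1+β^2)*π : ℝ) : ℂ) + ((-2/(1+β^2)*π : ℝ) : ℂ) * Complex.I := by
    rw [kernelRate_eq]; push_cast; ring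
  rw [Kd0_add_Kd_pi, hz]
  refine div_neg_of_neg_of_pos (Complex.im_mul_cosh_add_one_div_sinh_neg (by positivity) ?_)
    (by positivity)
  exact mul_neg_of_neg_of_pos (div_neg_of_neg_of_pos (by norm_num) (by positivity)) pi_pos

theorem asymptotics_symmetric_case_general (β : ℝ) (hβ : 0 < β) (T : ℝ) (I₁ I₂ θ : ℝ → ℝ)
    (hI2 : ∀ t, T ≤ t → 0 < I₂ t)
    (hd2 : ∀ t, T ≤ t → HasDerivAt I₂
      (2*Kd0 β*(I₂ t)^2 + 2*Kd β (2*Real.pi - θ t)*(I₁ t)*(I₂ t)) t)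
    (hratio : Filter.Tendsto (fun t => I₁ t / I₂ t) Filter.atTop (nhds 1))
    (hangle : Filter.Tendsto θ Filter.atTop (nhds Real.pi)) :
    Kd0 β + Kd β Real.pi < 0 ∧
    Filter.Tendsto (fun t => t * I₂ t) Filter.atTop
      (nhds (1 / (-2*(Kd0 β + Kd β Real.pi)))) ∧
    Filter.Tendsto (fun t => t * I₁ t) Filter.atTop
      (nhds (1 / (-2*(Kd0 β + Kd β Real.pi)))) := by
  have hneg := Kd0_add_Kd_pi_neg hβ
  have hKd : Tendsto (fun t => Kd β (2*π - θ t)) atTop (𝓝 (Kd β π)) := by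
    have h := (tendsto_const_nhds (x := 2*π)).sub hangle
    rw [show 2*π - π = π by ring] at h
    exact ((continuous_Kd β).tendsto π).comp h
  have hinv : ∀ t, T ≤ t → HasDerivAt (fun u => (I₂ u)⁻¹)
      (-(2*Kd0 β + 2*Kd β (2*π - θ t) * (I₁ t / I₂ t))) t := fun t ht =>
    ((hd2 t ht).inv (hI2 t ht).ne').congr_deriv (by field_simp [(hI2 t ht).ne'])
  have hlim : Tendsto (fun t => -(2*Kd0 β + 2*Kd β (2*π - θ t) * (I₁ t / I₂ t))) atTop
      (𝓝 (-2*(Kd0 β + Kd β π))) := by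
    convert (tendsto_const_nhds.add ((hKd.const_mul 2).mul hratio)).neg using 2
    ring
  have h₂ := tendsto_mul_of_hasDerivAt_inv_tendsto hinv hlim (by linarith)
  rw [← one_div] at h₂
  refine ⟨hneg, h₂, ?_⟩
  refine (one_mul (1 / (-2*(Kd0 β + Kd β π))) ▸ hratio.mul h₂).congr' ?_
  filter_upwards [eventually_ge_atTop T] with t ht
  field_simp [(hI2 t ht).ne']

/-- Fix `β > 0`. If `(I₁,I₂,θ)` solves the original system on `[T,∞)` with `I₂ > 0`,
`θ ∈ (0,2π)`, `I₁/I₂ → 1` and `θ → π` as `t → ∞`, then `K'(0) + K'(π) < 0` and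
`t·I₂(t) → 1/(−2(K'(0)+K'(π)))` and `t·I₁(t) → 1/(−2(K'(0)+K'(π)))` as `t → ∞`. -/
theorem asymptotics_symmetric_case (β : ℝ) (hβ : 0 < β) (T : ℝ) (I₁ I₂ θ : ℝ → ℝ)
    (hI2 : ∀ t, T ≤ t → 0 < I₂ t)
    (hθ : ∀ t, T ≤ t → θ t ∈ Set.Ioo (0:ℝ) (2*Real.pi))
    (hd1 : ∀ t, T ≤ t → HasDerivAt I₁
      (2*Kd0 β*(I₁ t)^2 + 2*Kd β (θ t)*(I₁ t)*(I₂ t)) t)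
    (hd2 : ∀ t, T ≤ t → HasDerivAt I₂
      (2*Kd0 β*(I₂ t)^2 + 2*Kd β (2*Real.pi - θ t)*(I₁ t)*(I₂ t)) t)
    (hdθ : ∀ t, T ≤ t → HasDerivAt θ
      (2*(Kker β 0 - Kker β (2*Real.pi - θ t))*(I₁ t) +
        2*(Kker β (θ t) - Kker β 0)*(I₂ t)) t)
    (hc1 : ContinuousOn (deriv I₁) (Set.Ici T))
    (hc2 : ContinuousOn (deriv I₂) (Set.Ici T))
    (hcθ : ContinuousOn (deriv θ) (Set.Ici T))
    (hratio : Filter.Tendsto (fun t => I₁ t / I₂ t) Filter.atTop (nhds 1))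
    (hangle : Filter.Tendsto θ Filter.atTop (nhds Real.pi)) :
    Kd0 β + Kd β Real.pi < 0 ∧
    Filter.Tendsto (fun t => t * I₂ t) Filter.atTop
      (nhds (1 / (-2*(Kd0 β + Kd β Real.pi)))) ∧
    Filter.Tendsto (fun t => t * I₁ t) Filter.atTop
      (nhds (1 / (-2*(Kd0 β + Kd β Real.pi)))) :=
  asymptotics_symmetric_case_general β hβ T I₁ I₂ θ hI2 hd2 hratio hangle
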